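/- Let f : ℂ → ℂ be an SD map that preserves ℝ (i.e., f(x) is real for every real x). Then either f is the identity map (f(z) = z for all z ∈ ℂ) or f is complex conjugation (f(z) = z̄ for all z ∈ ℂ). No continuity assumption is required. -/

import Mathlib

/-!
An SD map on a field of characteristic `≠ 2` fixes `0` and `1`, is odd and multiplicative, and
satisfies `(f u - f v) * f (u + v) = (f u + f v) * f (u - v)`; in characteristic zero this
recursion pins down `f 2 = 2` and then `f` fixes `ℚ`. On `ℝ`, `f x = f (√x) ^ 2` makes `f`
positive on positives, so by the recursion `f > 1` on `(1, ∞)`, so by multiplicativity `f` is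
increasing on `(0, ∞)`; fixing `ℚ`, it is the identity. Over `ℂ`, `f I ^ 2 = f (-1) = -1`, so up
to composing with conjugation `f I = I`; then the recursion gives `f (t + I) = ±(t + I)` for real
`t`, only `+` is consistent, and multiplicativity spreads this to `z = im z * (re z / im z + I)`.
-/

/-- A function `f : F → F` on a field `F` is an *SD map* if for all `x ≠ y` one has
`f x ≠ f y` and `f ((x+y)/(x-y)) = (f x + f y) / (f x - f y)`. -/
def IsSDMap {F : Type*} [Field F] (f : F → F) : Prop :=
  ∀ ⦃x y : F⦄, x ≠ y →
    f x ≠ f y ∧ f ((x + y) / (x - y)) = (f x + f y) / (f x - f y)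

namespace IsSDMap

section Field

variable {F : Type*} [Field F] {f : F → F}

theorem injective (hf : IsSDMap f) : Function.Injective f :=
  fun _ _ h => by_contra fun hne => (hf hne).1 h

theorem sub_ne_zero_of_ne (hf : IsSDMap f) {x y : F} (h : x ≠ y) : f x - f y ≠ 0 :=
  sub_ne_zero.mpr (hf h).1

theorem ringHom_comp (hf : IsSDMap f) (σ : F →+* F) : IsSDMap (σ ∘ f) := fun _ _ hxy =>
  ⟨σ.injective.ne (hf hxy).1, by simp [(hf hxy).2, map_div₀]⟩

section CharNeTwo

variable [NeZero (2 : F)]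

theorem map_one (hf : IsSDMap f) : f 1 = 1 := by
  have h₁ := (hf one_ne_zero).2
  have h₂ := (hf (two_ne_zero (α := F))).2
  simp only [add_zero, sub_zero, div_one, div_self (two_ne_zero (α := F))] at h₁ h₂
  rw [eq_div_iff (hf.sub_ne_zero_of_ne one_ne_zero)] at h₁
  rw [eq_div_iff (hf.sub_ne_zero_of_ne two_ne_zero)] at h₂
  have h : (f 1 - 1) * (f 1 - f 2) = 0 := by linear_combination h₁ - h₂
  exact sub_eq_zero.mp <| (mul_eq_zero.mp h).resolve_right
    (hf.sub_ne_zero_of_ne fun h => one_ne_zero (by linear_combination -h))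

theorem map_zero (hf : IsSDMap f) : f 0 = 0 := by
  have h := (hf one_ne_zero).2
  simp only [add_zero, sub_zero, div_one, hf.map_one] at h
  rw [eq_div_iff (by simpa [hf.map_one] using hf.sub_ne_zero_of_ne one_ne_zero)] at h
  have h2 : (2 : F) * f 0 = 0 := by linear_combination -h
  exact (mul_eq_zero.mp h2).resolve_left two_ne_zero

theorem map_ne_zero (hf : IsSDMap f) {x : F} (hx : x ≠ 0) : f x ≠ 0 :=
  hf.map_zero ▸ hf.injective.ne hx

theorem map_neg (hf : IsSDMap f) (x : F) : f (-x) = -f x := by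
  rcases eq_or_ne x 0 with rfl | hx
  · simp [hf.map_zero]
  have hne : x ≠ -x := fun h => hx <| mul_left_cancel₀ (two_ne_zero (α := F)) <| by
    linear_combination h
  have h := (hf hne).2
  rw [add_neg_cancel, zero_div, hf.map_zero, eq_comm,
    div_eq_zero_iff, or_iff_left (hf.sub_ne_zero_of_ne hne)] at h
  linear_combination h

theorem map_div (hf : IsSDMap f) (x y : F) : f (x / y) = f x / f y := by
  rcases eq_or_ne y 0 with rfl | hy
  · simp [hf.map_zero]
  rcases eq_or_ne x y with rfl | hxy
  · rw [div_self hy, div_self (hf.map_ne_zero hy), hf.map_one]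
  have ht : x / y ≠ 1 := fun h => hxy ((div_eq_one_iff_eq hy).mp h)
  -- `(t + 1) / (t - 1)` at `t = x / y` is `(x + y) / (x - y)`; the Cayley transform is injective.
  have h := (hf ht).2
  have harg : (x / y + 1) / (x / y - 1) = (x + y) / (x - y) := by
    field_simp [sub_ne_zero.mpr hxy]
  rw [harg, (hf hxy).2, hf.map_one, div_eq_div_iff (hf.sub_ne_zero_of_ne hxy)
    (by simpa [hf.map_one] using hf.sub_ne_zero_of_ne ht)] at h
  rw [eq_div_iff (hf.map_ne_zero hy)]
  exact mul_left_cancel₀ (two_ne_zero (α := F)) (by linear_combination h)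

theorem map_mul (hf : IsSDMap f) (x y : F) : f (x * y) = f x * f y := by
  rcases eq_or_ne y 0 with rfl | hy
  · simp [hf.map_zero]
  rw [← div_eq_iff (hf.map_ne_zero hy), ← hf.map_div, mul_div_cancel_right₀ x hy]

theorem sub_mul_map_add_eq (hf : IsSDMap f) (u v : F) :
    (f u - f v) * f (u + v) = (f u + f v) * f (u - v) := by
  rcases eq_or_ne v 0 with rfl | hv
  · simp [hf.map_zero]
  have hne : u + v ≠ u - v := fun h => hv <| mul_left_cancel₀ (two_ne_zero (α := F)) <| by
    linear_combination h
  have h := (hf hne).2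
  rw [show (u + v + (u - v)) / (u + v - (u - v)) = u / v by
      rw [← mul_div_mul_left u v (two_ne_zero (α := F))]; ring_nf,
    hf.map_div, div_eq_div_iff (hf.map_ne_zero hv) (hf.sub_ne_zero_of_ne hne)] at h
  linear_combination h

end CharNeTwo

section CharZero

variable [CharZero F]

theorem map_two (hf : IsSDMap f) : f 2 = 2 := by
  have E₁ := hf.sub_mul_map_add_eq 2 1
  have E₂ := hf.sub_mul_map_add_eq 4 1
  have E₃ := hf.sub_mul_map_add_eq 5 1
  have h₄ : f 4 = f 2 ^ 2 := by rw [sq, ← hf.map_mul]; norm_num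
  have h₆ : f 6 = f 2 * f 3 := by rw [← hf.map_mul]; norm_num
  norm_num [hf.map_one, h₄, h₆] at E₁ E₂ E₃
  -- eliminating `f 3` and `f 6` from three instances of `sub_mul_map_add_eq`
  have key : f 5 * (f 2 + 1) * f 2 ^ 2 * (f 2 - 2) = 0 := by
    linear_combination (f 2 * (f 2 - 1) / 2) * E₂
      + (f 2 * (f 2 ^ 2 + 1) + (f 2 + 1) * (f 5 - 1) * f 2) / 2 * E₁
      - ((f 2 + 1) * (f 2 - 1) / 2) * E₃
  have h₂₁ : f 2 + 1 ≠ 0 := by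
    simpa [hf.map_neg, hf.map_one] using hf.sub_ne_zero_of_ne (show (2 : F) ≠ -1 by norm_num)
  simpa [sub_eq_zero, hf.map_ne_zero, h₂₁] using key

theorem map_natCast (hf : IsSDMap f) : ∀ n : ℕ, f n = n
  | 0 => by simpa using hf.map_zero
  | 1 => by simpa using hf.map_one
  | 2 => by simpa using hf.map_two
  | n + 3 => by
    have h := hf.sub_mul_map_add_eq (n + 2 : F) 1
    have h₁ : ((n + 1 : ℕ) : F) ≠ 0 := Nat.cast_ne_zero.mpr n.succ_ne_zero
    have h₂ := hf.map_natCast (n + 2)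
    have h₃ := hf.map_natCast (n + 1)
    push_cast at h₁ h₂ h₃ ⊢
    rw [hf.map_one, h₂, show (n + 2 : F) + 1 = n + 3 by ring,
      show (n + 2 : F) - 1 = n + 1 by ring, h₃] at h
    exact mul_left_cancel₀ h₁ (by linear_combination h)

theorem map_intCast (hf : IsSDMap f) : ∀ n : ℤ, f n = n
  | (n : ℕ) => by exact_mod_cast hf.map_natCast n
  | .negSucc n => by rw [Int.cast_negSucc, hf.map_neg, hf.map_natCast]

theorem map_ratCast (hf : IsSDMap f) (q : ℚ) : f q = q := by
  rw [Rat.cast_def, hf.map_div, hf.map_intCast, hf.map_natCast]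

end CharZero

end Field

section Real

variable {f : ℝ → ℝ}

theorem pos_of_pos (hf : IsSDMap f) {x : ℝ} (hx : 0 < x) : 0 < f x := by
  have h : f x = f √x ^ 2 := by rw [sq, ← hf.map_mul, Real.mul_self_sqrt hx.le]
  exact (h ▸ sq_nonneg _).lt_of_ne (hf.map_ne_zero hx.ne').symm

theorem one_lt_of_one_lt (hf : IsSDMap f) {x : ℝ} (hx : 1 < x) : 1 < f x := by
  have h := hf.sub_mul_map_add_eq x 1
  rw [hf.map_one] at h
  have hsucc := hf.pos_of_pos (show 0 < x + 1 by linarith)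
  have hpred := hf.pos_of_pos (show 0 < x - 1 by linarith)
  nlinarith [hf.pos_of_pos (show 0 < x by linarith)]

theorem strictMonoOn_Ioi (hf : IsSDMap f) : StrictMonoOn f (Set.Ioi 0) := by
  intro x (hx : 0 < x) y _ hxy
  have h : f y = f (y / x) * f x := by rw [← hf.map_mul, div_mul_cancel₀ _ hx.ne']
  have h₁ := hf.one_lt_of_one_lt ((one_lt_div hx).mpr hxy)
  nlinarith [hf.pos_of_pos hx]

theorem eq_id_of_real (hf : IsSDMap f) : f = id := by
  have hpos : ∀ x, 0 < x → f x = x := by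
    intro x hx
    rcases lt_trichotomy (f x) x with h | h | h
    · obtain ⟨q, hq₁, hq₂⟩ := exists_rat_btwn h
      have := hf.strictMonoOn_Ioi ((hf.pos_of_pos hx).trans hq₁) hx hq₂
      rw [hf.map_ratCast] at this
      linarith
    · exact h
    · obtain ⟨q, hq₁, hq₂⟩ := exists_rat_btwn h
      have := hf.strictMonoOn_Ioi hx (hx.trans hq₁) hq₁
      rw [hf.map_ratCast] at this
      linarith
  funext x
  rcases lt_trichotomy x 0 with hx | rfl | hx
  · rw [← neg_neg x, hf.map_neg, hpos _ (neg_pos.mpr hx), id]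
  · exact hf.map_zero
  · exact hpos x hx

end Real

section Complex

open Complex

variable {f : ℂ → ℂ}

theorem map_ofReal_of_real_valued (hf : IsSDMap f) (hR : ∀ x : ℝ, ∃ r : ℝ, f x = r) (x : ℝ) :
    f x = x := by
  have hre : ∀ x : ℝ, f x = (f x).re := fun x => by
    obtain ⟨r, hr⟩ := hR x
    rw [hr, ofReal_re]
  have hg : IsSDMap fun x : ℝ => (f x).re := fun x y hxy => by
    have h := hf (ofReal_injective.ne hxy)
    refine ⟨fun h' => h.1 (by rw [hre x, hre y]; exact congrArg ofReal h'), ofReal_injective ?_⟩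
    rw [← hre]
    push_cast
    rw [← hre, ← hre, h.2]
  rw [hre x, congrFun hg.eq_id_of_real x, id]

theorem map_I_eq_or_eq_neg (hf : IsSDMap f) : f I = I ∨ f I = -I := by
  refine sq_eq_sq_iff_eq_or_eq_neg.mp ?_
  rw [sq, sq, ← hf.map_mul, I_mul_I, hf.map_neg, hf.map_one]

theorem map_ofReal_add_I_eq_or_eq_neg (hf : IsSDMap f) (hreal : ∀ x : ℝ, f x = x)
    (hI : f I = I) (t : ℝ) :
    f (t + I) = t + I ∨ f (t + I) = -(t + I) := by
  have hne : (t : ℂ) - I ≠ 0 := fun h => by simpa using congrArg im h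
  have h := hf.sub_mul_map_add_eq t I
  have hprod : f (t + I) * f (t - I) = t ^ 2 + 1 := by
    rw [← hf.map_mul, show (t + I) * (t - I) = ((t ^ 2 + 1 : ℝ) : ℂ) by
      push_cast; linear_combination -I_sq, hreal]
    push_cast; ring
  rw [hreal, hI] at h
  refine sq_eq_sq_iff_eq_or_eq_neg.mp (mul_left_cancel₀ hne ?_)
  linear_combination f (t + I) * h + (t + I) * hprod + (t + I) * I_sq

theorem map_ofReal_add_I (hf : IsSDMap f) (hreal : ∀ x : ℝ, f x = x) (hI : f I = I) (t : ℝ) :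
    f (t + I) = t + I := by
  refine (hf.map_ofReal_add_I_eq_or_eq_neg hreal hI t).resolve_right fun hneg => ?_
  rcases eq_or_ne t 0 with rfl | ht
  · simp only [ofReal_zero, zero_add, hI] at hneg
    norm_num [Complex.ext_iff] at hneg
  -- otherwise `sub_mul_map_add_eq` at `(t + I, t)` forces `(2t + I) ^ 2 = ±1`
  have h := hf.sub_mul_map_add_eq (t + I) t
  rw [hneg, hreal, add_sub_cancel_left, hI, show (t : ℂ) + I + t = (2 * t : ℝ) + I by
    push_cast; ring] at h
  have hsq : ((2 * t : ℝ) + I) ^ 2 = 1 ∨ ((2 * t : ℝ) + I) ^ 2 = -1 := by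
    rcases hf.map_ofReal_add_I_eq_or_eq_neg hreal hI (2 * t) with h' | h' <;> rw [h'] at h
    · right; push_cast at h ⊢; linear_combination -h + I_sq
    · left; push_cast at h ⊢; linear_combination h - I_sq
  rcases hsq with h' | h' <;> simpa [sq, ht] using congrArg im h'

theorem eq_id_of_map_ofReal_of_map_I (hf : IsSDMap f) (hreal : ∀ x : ℝ, f x = x)
    (hI : f I = I) : f = id := by
  funext z
  rcases eq_or_ne z.im 0 with hz | hz
  · rw [← re_add_im z, hz, ofReal_zero, zero_mul, add_zero, hreal, id]
  have hdecomp : z = z.im * ((z.re / z.im : ℝ) + I) := by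
    apply Complex.ext <;> simp [mul_div_cancel₀ _ hz]
  rw [hdecomp, hf.map_mul, hreal, hf.map_ofReal_add_I hreal hI, id]

end Complex

end IsSDMap

theorem real_preserving_sd_map_complex (f : ℂ → ℂ) (hf : IsSDMap f)
    (hR : ∀ x : ℝ, ∃ r : ℝ, f (x : ℂ) = (r : ℂ)) :
    (∀ z : ℂ, f z = z) ∨ (∀ z : ℂ, f z = (starRingEnd ℂ) z) := by
  have hreal := hf.map_ofReal_of_real_valued hR
  rcases hf.map_I_eq_or_eq_neg with hI | hI
  · exact .inl fun z => congrFun (hf.eq_id_of_map_ofReal_of_map_I hreal hI) z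
  · have hconj := (hf.ringHom_comp (starRingEnd ℂ)).eq_id_of_map_ofReal_of_map_I
      (by simp [hreal]) (by simp [hI])
    exact .inr fun z => by simpa using congrArg (starRingEnd ℂ) (congrFun hconj z)
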